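/- arXiv:2002.04839 — 4 statements merged into one kernel-verified Lean document; each statement's English description precedes it below -/
import Mathlib

section
/- Under the ε-free LaProp recursion with bias corrections, the magnitude of the bias-corrected momentum is uniformly bounded: for every t ≥ 1, |m_t/(1−μ^t)| ≤ 1/√(1−ν). In particular the bound depends only on ν and holds for every choice of μ ∈ [0,1) and ν ∈ [0,1). -/
/-- **LaProp bias-corrected momentum bound.**
Under the ε-free LaProp recursion with bias corrections, the magnitude of the bias-corrected
momentum is uniformly bounded: for every `t ≥ 1`, `|m t / (1 - μ^t)| ≤ 1 / √(1 - ν)`. -/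
theorem laprop_bias_corrected_momentum_bound
    (μ ν : ℝ) (hμ : μ ∈ Set.Ico (0:ℝ) 1) (hν : ν ∈ Set.Ico (0:ℝ) 1)
    (g n m : ℕ → ℝ)
    (hg : ∀ t, 1 ≤ t → g t ≠ 0)
    (hn0 : n 0 = 0)
    (hn : ∀ t, 1 ≤ t → n t = ν * n (t - 1) + (1 - ν) * (g t) ^ 2)
    (hm0 : m 0 = 0)
    (hm : ∀ t, 1 ≤ t →
      m t = μ * m (t - 1) + (1 - μ) * (g t / Real.sqrt (n t / (1 - ν ^ t)))) :
    ∀ t, 1 ≤ t → |m t / (1 - μ ^ t)| ≤ 1 / Real.sqrt (1 - ν) := by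
  obtain ⟨hμ0, hμ1⟩ := hμ
  obtain ⟨hν0, hν1⟩ := hν
  have hν1' : (0:ℝ) < 1 - ν := by linarith
  have hB : (0:ℝ) < Real.sqrt (1 - ν) := Real.sqrt_pos.mpr hν1'
  -- n is nonnegative
  have hnn : ∀ t, 0 ≤ n t := by
    intro t
    induction t with
    | zero => rw [hn0]
    | succ k ih =>
      rw [hn (k+1) (Nat.le_add_left 1 k)]
      simp only [Nat.add_sub_cancel]
      have : 0 ≤ (1 - ν) * g (k+1) ^ 2 := by positivity
      nlinarith
  -- the per-step term is bounded
  have hstep : ∀ t, 1 ≤ t → |g t / Real.sqrt (n t / (1 - ν ^ t))| ≤ 1 / Real.sqrt (1 - ν) := by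
    intro t ht
    have hg' : g t ≠ 0 := hg t ht
    have hg2 : 0 < g t ^ 2 := by positivity
    have hnt : (1 - ν) * g t ^ 2 ≤ n t := by
      rw [hn t ht]
      have := hnn (t - 1)
      nlinarith
    have hνt1 : ν ^ t < 1 := pow_lt_one₀ hν0 hν1 (by omega)
    have hνt0 : 0 < 1 - ν ^ t := by linarith
    have hνtle : 1 - ν ^ t ≤ 1 := by
      have : 0 ≤ ν ^ t := pow_nonneg hν0 t
      linarith
    have hle : (1 - ν) * g t ^ 2 ≤ n t / (1 - ν ^ t) := by
      calc (1 - ν) * g t ^ 2 ≤ n t := hnt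
        _ ≤ n t / (1 - ν ^ t) := by
            rw [le_div_iff₀ hνt0]
            nlinarith [hnn t]
    have hsq : Real.sqrt ((1 - ν) * g t ^ 2) ≤ Real.sqrt (n t / (1 - ν ^ t)) :=
      Real.sqrt_le_sqrt hle
    have hsqeq : Real.sqrt ((1 - ν) * g t ^ 2) = Real.sqrt (1 - ν) * |g t| := by
      rw [Real.sqrt_mul hν1'.le, Real.sqrt_sq_eq_abs]
    have hden : 0 < Real.sqrt (n t / (1 - ν ^ t)) := by
      apply lt_of_lt_of_le _ hsq
      rw [hsqeq]
      positivity
    rw [abs_div, abs_of_pos hden, div_le_div_iff₀ hden hB]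
    calc |g t| * Real.sqrt (1 - ν) = Real.sqrt ((1 - ν) * g t ^ 2) * 1 := by
          rw [hsqeq]; ring
      _ ≤ Real.sqrt (n t / (1 - ν ^ t)) * 1 := by
          apply mul_le_mul_of_nonneg_right hsq zero_le_one
      _ = 1 * Real.sqrt (n t / (1 - ν ^ t)) := by ring
  -- main induction
  have hmain : ∀ t, |m t| ≤ (1 - μ ^ t) / Real.sqrt (1 - ν) := by
    intro t
    induction t with
    | zero => simp [hm0]
    | succ k ih =>
      rw [hm (k+1) (Nat.le_add_left 1 k)]
      simp only [Nat.add_sub_cancel]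
      have hs := hstep (k+1) (Nat.le_add_left 1 k)
      have h1 : |μ * m k + (1 - μ) * (g (k+1) / Real.sqrt (n (k+1) / (1 - ν ^ (k+1))))|
          ≤ μ * |m k| + (1 - μ) * |g (k+1) / Real.sqrt (n (k+1) / (1 - ν ^ (k+1)))| := by
        calc _ ≤ |μ * m k| + |(1 - μ) * (g (k+1) / Real.sqrt (n (k+1) / (1 - ν ^ (k+1))))| :=
              abs_add_le _ _
          _ = μ * |m k| + (1 - μ) * |g (k+1) / Real.sqrt (n (k+1) / (1 - ν ^ (k+1)))| := by
              rw [abs_mul, abs_mul, abs_of_nonneg hμ0, abs_of_nonneg (by linarith : (0:ℝ) ≤ 1 - μ)]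
      refine h1.trans ?_
      have h2 : μ * |m k| ≤ μ * ((1 - μ ^ k) / Real.sqrt (1 - ν)) :=
        mul_le_mul_of_nonneg_left ih hμ0
      have h3 : (1 - μ) * |g (k+1) / Real.sqrt (n (k+1) / (1 - ν ^ (k+1)))|
          ≤ (1 - μ) * (1 / Real.sqrt (1 - ν)) :=
        mul_le_mul_of_nonneg_left hs (by linarith)
      have : μ * ((1 - μ ^ k) / Real.sqrt (1 - ν)) + (1 - μ) * (1 / Real.sqrt (1 - ν))
          = (1 - μ ^ (k+1)) / Real.sqrt (1 - ν) := by
        field_simp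
        ring
      linarith
  intro t ht
  have hμt : μ ^ t < 1 := pow_lt_one₀ hμ0 hμ1 (by omega)
  have hμt0 : 0 < 1 - μ ^ t := by linarith
  rw [abs_div, abs_of_pos hμt0, div_le_div_iff₀ hμt0 hB]
  calc |m t| * Real.sqrt (1 - ν) ≤ (1 - μ ^ t) / Real.sqrt (1 - ν) * Real.sqrt (1 - ν) :=
        mul_le_mul_of_nonneg_right (hmain t) hB.le
    _ = 1 * (1 - μ ^ t) := by field_simp
end

section
/- The uncorrected LaProp momentum satisfies, for every t ≥ 0, the bound |m_t| ≤ (1−μ^t)/√(1−ν). -/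
/-- **Uncorrected LaProp momentum bound.**
The uncorrected LaProp momentum satisfies, for every `t ≥ 0`, `|m t| ≤ (1 - μ^t) / √(1 - ν)`. -/
theorem laprop_uncorrected_momentum_bound
    (μ ν : ℝ) (hμ : μ ∈ Set.Ico (0:ℝ) 1) (hν : ν ∈ Set.Ico (0:ℝ) 1)
    (g n m : ℕ → ℝ)
    (hg : ∀ t, 1 ≤ t → g t ≠ 0)
    (hn0 : n 0 = 0)
    (hn : ∀ t, 1 ≤ t → n t = ν * n (t - 1) + (1 - ν) * (g t) ^ 2)
    (hm0 : m 0 = 0)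
    (hm : ∀ t, 1 ≤ t →
      m t = μ * m (t - 1) + (1 - μ) * (g t / Real.sqrt (n t / (1 - ν ^ t)))) :
    ∀ t : ℕ, |m t| ≤ (1 - μ ^ t) / Real.sqrt (1 - ν) := by
  obtain ⟨hμ0, hμ1⟩ := hμ
  obtain ⟨hν0, hν1⟩ := hν
  have hν' : (0:ℝ) < 1 - ν := by linarith
  have hs : (0:ℝ) < Real.sqrt (1 - ν) := Real.sqrt_pos.mpr hν'
  -- n is nonnegative
  have hnn : ∀ t, 0 ≤ n t := by
    intro t
    induction t with
    | zero => simp [hn0]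
    | succ k ih =>
      rw [hn (k+1) (Nat.le_add_left 1 k)]
      simp only [Nat.add_sub_cancel]
      have : 0 ≤ (1 - ν) * (g (k+1))^2 := by positivity
      nlinarith
  intro t
  induction t with
  | zero => simp [hm0]
  | succ k ih =>
    have hk1 : 1 ≤ k + 1 := Nat.le_add_left 1 k
    have hglb : (1 - ν) * (g (k+1))^2 ≤ n (k+1) := by
      rw [hn (k+1) hk1]
      simp only [Nat.add_sub_cancel]
      nlinarith [hnn k]
    have hgpos : 0 < (g (k+1))^2 := pow_pos (abs_pos.mpr (hg (k+1) hk1)) 2 |>.trans_le (by rw [sq_abs])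
    have hnpos : 0 < n (k+1) := lt_of_lt_of_le (by positivity) hglb
    have hcν : 0 < 1 - ν ^ (k+1) := by
      have : ν ^ (k+1) < 1 := pow_lt_one₀ hν0 hν1 (Nat.succ_ne_zero k)
      linarith
    have hcν1 : 1 - ν ^ (k+1) ≤ 1 := by
      have : 0 ≤ ν ^ (k+1) := pow_nonneg hν0 _
      linarith
    -- key: |g/√(n/(1-ν^t))| ≤ 1/√(1-ν)
    have hratio : |g (k+1) / Real.sqrt (n (k+1) / (1 - ν ^ (k+1)))| ≤ 1 / Real.sqrt (1 - ν) := by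
      have hspos : 0 < n (k+1) / (1 - ν ^ (k+1)) := div_pos hnpos hcν
      rw [abs_div, abs_of_nonneg (Real.sqrt_nonneg _)]
      rw [div_le_div_iff₀ (Real.sqrt_pos.mpr hspos) hs]
      have h1 : |g (k+1)| * Real.sqrt (1 - ν) = Real.sqrt ((1 - ν) * (g (k+1))^2) := by
        rw [Real.sqrt_mul hν'.le, Real.sqrt_sq_eq_abs]; ring
      rw [h1]
      have h2 : (1 - ν) * (g (k+1))^2 ≤ n (k+1) / (1 - ν ^ (k+1)) := by
        calc (1 - ν) * (g (k+1))^2 ≤ n (k+1) := hglb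
          _ ≤ n (k+1) / (1 - ν ^ (k+1)) := by
              rw [le_div_iff₀ hcν]; nlinarith
      calc Real.sqrt ((1 - ν) * (g (k+1))^2) ≤ Real.sqrt (n (k+1) / (1 - ν ^ (k+1))) :=
            Real.sqrt_le_sqrt h2
        _ ≤ 1 * Real.sqrt (n (k+1) / (1 - ν ^ (k+1))) := by rw [one_mul]
    have hmeq := hm (k+1) hk1
    simp only [Nat.add_sub_cancel] at hmeq
    rw [hmeq]
    have h1μ : 0 ≤ 1 - μ := by linarith
    calc |μ * m k + (1 - μ) * (g (k+1) / Real.sqrt (n (k+1) / (1 - ν ^ (k+1))))|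
        ≤ |μ * m k| + |(1 - μ) * (g (k+1) / Real.sqrt (n (k+1) / (1 - ν ^ (k+1))))| :=
          abs_add_le _ _
      _ = μ * |m k| + (1 - μ) * |g (k+1) / Real.sqrt (n (k+1) / (1 - ν ^ (k+1)))| := by
          rw [abs_mul, abs_mul, abs_of_nonneg hμ0, abs_of_nonneg h1μ]
      _ ≤ μ * ((1 - μ ^ k) / Real.sqrt (1 - ν)) + (1 - μ) * (1 / Real.sqrt (1 - ν)) := by
          gcongr
      _ = (1 - μ ^ (k+1)) / Real.sqrt (1 - ν) := by
          field_simp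
          ring
end

section
/- Divergence of Adam's momentum-to-RMS ratio in the ν → 0 limit: let (g_i)_{i≥1} be an i.i.d. sequence of standard Gaussian random variables on a probability space (Ω, P), let μ ∈ (0,1), let t ≥ 2, and define u_t(ω) = (Σ_{i=1}^{t} (1−μ)·μ^{t−i}·g_i(ω)) / |g_t(ω)|. Then the second moment of u_t is infinite: ∫⁻ u_t(ω)² dP(ω) = ∞. -/
/-!
Split the momentum as `Y + (1 - μ) g_t`, where `Y` only involves `g_1, …, g_{t-1}` and is
therefore independent of `g_t`. Since `t ≥ 2`, `Y` contains a nonzero multiple of the Gaussian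
`g_{t-1}`, which is independent of the rest of `Y`, so `Y ≠ 0` almost surely. For fixed `y ≠ 0`
the integrand `((y + c x) / |x|)²` is at least `(y / 2)² / x²` for small `x > 0`, where the
Gaussian density is bounded below, and `x⁻²` is not integrable at `0`. By Tonelli, the inner
integral is infinite for almost every value of `Y`.
-/

open MeasureTheory ProbabilityTheory Set
open scoped ENNReal NNReal

lemma lintegral_Ioc_rpow_eq_top {δ s : ℝ} (hδ : 0 < δ) (hs : s ≤ -1) :
    ∫⁻ x in Ioc 0 δ, ENNReal.ofReal (x ^ s) = ∞ := by
  by_contra h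
  have hint : IntegrableOn (fun x : ℝ ↦ x ^ s) (Ioc 0 δ) :=
    (lintegral_ofReal_ne_top_iff_integrable (by fun_prop)
      (ae_restrict_of_forall_mem measurableSet_Ioc fun x hx ↦ Real.rpow_nonneg hx.1.le s)).1 h
  have := (intervalIntegral.integrableOn_Ioo_rpow_iff hδ).1 (hint.mono_set Ioo_subset_Ioc_self)
  linarith

lemma gaussianPDFReal_zero_le_of_abs_le (v : ℝ≥0) {x y : ℝ} (hxy : |x| ≤ |y|) :
    gaussianPDFReal 0 v y ≤ gaussianPDFReal 0 v x := by
  have hsq : x ^ 2 ≤ y ^ 2 := sq_le_sq.2 hxy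
  simp only [gaussianPDFReal, sub_zero]
  gcongr ?_ * Real.exp ?_
  exact div_le_div_of_nonneg_right (neg_le_neg hsq) (by positivity)

lemma setLIntegral_Ioc_rpow_gaussianReal_eq_top {v : ℝ≥0} (hv : v ≠ 0) {δ s : ℝ} (hδ : 0 < δ)
    (hs : s ≤ -1) :
    ∫⁻ x in Ioc 0 δ, ENNReal.ofReal (x ^ s) ∂gaussianReal 0 v = ∞ := by
  have hpdf : ENNReal.ofReal (gaussianPDFReal 0 v δ) ≠ 0 := by
    simpa using gaussianPDFReal_pos 0 v δ hv
  rw [gaussianReal_of_var_ne_zero 0 hv, setLIntegral_withDensity_eq_setLIntegral_mul _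
    (measurable_gaussianPDF 0 v) (by fun_prop) measurableSet_Ioc, eq_top_iff]
  calc ∞ = ENNReal.ofReal (gaussianPDFReal 0 v δ) * ∫⁻ x in Ioc 0 δ, ENNReal.ofReal (x ^ s) := by
        rw [lintegral_Ioc_rpow_eq_top hδ hs, ENNReal.mul_top hpdf]
    _ = ∫⁻ x in Ioc 0 δ, ENNReal.ofReal (gaussianPDFReal 0 v δ) * ENNReal.ofReal (x ^ s) :=
        (lintegral_const_mul _ (by fun_prop)).symm
    _ ≤ _ := setLIntegral_mono (by fun_prop) fun x hx ↦ by
        rw [Pi.mul_apply, gaussianPDF]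
        gcongr
        exact gaussianPDFReal_zero_le_of_abs_le v
          (by rw [abs_of_pos hx.1, abs_of_pos hδ]; exact hx.2)

lemma sq_half_abs_mul_rpow_neg_two_le {x y c : ℝ} (hx : 0 < x) (hcx : |c| * x ≤ |y| / 2) :
    (|y| / 2) ^ 2 * x ^ (-2 : ℝ) ≤ ((y + c * x) / |x|) ^ 2 := by
  have hlow : |y| / 2 ≤ |y + c * x| := by
    have := abs_add_le (y + c * x) (-(c * x))
    rw [abs_neg, abs_mul, abs_of_pos hx, add_neg_cancel_right] at this
    linarith
  calc (|y| / 2) ^ 2 * x ^ (-2 : ℝ) = (|y| / 2) ^ 2 / x ^ 2 := by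
        rw [Real.rpow_neg hx.le, Real.rpow_two, ← div_eq_mul_inv]
    _ ≤ (y + c * x) ^ 2 / x ^ 2 := by
        gcongr ?_ / _
        simpa only [sq_abs] using pow_le_pow_left₀ (by positivity) hlow 2
    _ = ((y + c * x) / |x|) ^ 2 := by rw [abs_of_pos hx, div_pow]

lemma lintegral_sq_div_abs_gaussianReal_eq_top {v : ℝ≥0} (hv : v ≠ 0) {y : ℝ} (hy : y ≠ 0)
    (c : ℝ) : ∫⁻ x, ENNReal.ofReal (((y + c * x) / |x|) ^ 2) ∂gaussianReal 0 v = ∞ := by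
  set δ := |y| / (2 * (|c| + 1))
  have hδ : 0 < δ := by positivity
  have hcδ : |c| * δ ≤ |y| / 2 := by
    rw [mul_div_assoc', div_le_div_iff₀ (by positivity) two_pos]
    nlinarith [abs_nonneg c, abs_nonneg y]
  have hK : ENNReal.ofReal ((|y| / 2) ^ 2) ≠ 0 := by simpa using hy
  rw [eq_top_iff]
  calc ∞ = ENNReal.ofReal ((|y| / 2) ^ 2) *
        ∫⁻ x in Ioc 0 δ, ENNReal.ofReal (x ^ (-2 : ℝ)) ∂gaussianReal 0 v := by
        rw [setLIntegral_Ioc_rpow_gaussianReal_eq_top hv hδ (by norm_num), ENNReal.mul_top hK]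
    _ = ∫⁻ x in Ioc 0 δ, ENNReal.ofReal ((|y| / 2) ^ 2 * x ^ (-2 : ℝ)) ∂gaussianReal 0 v := by
        rw [← lintegral_const_mul _ (by fun_prop)]
        refine setLIntegral_congr_fun measurableSet_Ioc fun x hx ↦ ?_
        rw [ENNReal.ofReal_mul (by positivity)]
    _ ≤ ∫⁻ x in Ioc 0 δ, ENNReal.ofReal (((y + c * x) / |x|) ^ 2) ∂gaussianReal 0 v :=
        setLIntegral_mono (by fun_prop) fun x hx ↦ ENNReal.ofReal_le_ofReal
          (sq_half_abs_mul_rpow_neg_two_le hx.1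
            ((mul_le_mul_of_nonneg_left hx.2 (abs_nonneg c)).trans hcδ))
    _ ≤ _ := setLIntegral_le_lintegral _ _

namespace ProbabilityTheory

variable {Ω : Type*} [MeasurableSpace Ω] {P : Measure Ω}

lemma iIndepFun.indepFun_sum_mul_of_notMem {ι : Type*} {g : ι → Ω → ℝ} (hindep : iIndepFun g P)
    (hmeas : ∀ i, Measurable (g i)) (a : ι → ℝ) {s : Finset ι} {i : ι} (hi : i ∉ s) :
    IndepFun (fun ω ↦ ∑ j ∈ s, a j * g j ω) (g i) P := by
  classical
  have h := (hindep.comp (fun j x ↦ Function.update a i 1 j * x)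
    fun j ↦ measurable_const_mul _).indepFun_finsetSum_of_notMem
    (fun j ↦ (hmeas j).const_mul _) hi
  convert h using 1
  · ext ω
    simp only [Finset.sum_apply, Function.comp_apply]
    refine Finset.sum_congr rfl fun j hj ↦ ?_
    rw [Function.update_of_ne (ne_of_mem_of_not_mem hj hi)]
  · ext ω
    simp

lemma IndepFun.ae_ne_comp [IsFiniteMeasure P] {β : Type*} [MeasurableSpace β] {Z : Ω → β}
    {X : Ω → ℝ} (h : IndepFun Z X P) (hZ : Measurable Z) (hX : Measurable X)
    [NullSingletonClass (P.map X)] {f : β → ℝ} (hf : Measurable f) : ∀ᵐ ω ∂P, X ω ≠ f (Z ω) := by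
  have hS : MeasurableSet {p : β × ℝ | p.2 = f p.1} :=
    measurableSet_eq_fun measurable_snd (hf.comp measurable_fst)
  rw [ae_iff]
  simp only [ne_eq, not_not]
  change P ((fun ω ↦ (Z ω, X ω)) ⁻¹' {p : β × ℝ | p.2 = f p.1}) = 0
  rw [← Measure.map_apply (hZ.prodMk hX) hS,
    h.map_prod_eq_prod_map_map hZ.aemeasurable hX.aemeasurable, Measure.prod_apply hS]
  simp [Set.preimage, measure_singleton]

lemma lintegral_sq_div_abs_eq_top_of_indepFun [IsProbabilityMeasure P] {Y X : Ω → ℝ}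
    (h : IndepFun Y X P) (hY : Measurable Y) (hX : Measurable X) {v : ℝ≥0} (hv : v ≠ 0)
    (hlaw : P.map X = gaussianReal 0 v) (hY0 : ∀ᵐ ω ∂P, Y ω ≠ 0) (c : ℝ) :
    ∫⁻ ω, ENNReal.ofReal (((Y ω + c * X ω) / |X ω|) ^ 2) ∂P = ∞ := by
  set F : ℝ × ℝ → ℝ≥0∞ := fun p ↦ ENNReal.ofReal (((p.1 + c * p.2) / |p.2|) ^ 2)
  have hF : Measurable F := by fun_prop
  have hY0' : ∀ᵐ y ∂P.map Y, y ≠ 0 :=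
    (ae_map_iff hY.aemeasurable (measurableSet_singleton 0).compl).2 hY0
  have : IsProbabilityMeasure (P.map Y) := Measure.isProbabilityMeasure_map hY.aemeasurable
  calc ∫⁻ ω, F (Y ω, X ω) ∂P = ∫⁻ p, F p ∂(P.map Y).prod (gaussianReal 0 v) := by
        rw [← hlaw, ← h.map_prod_eq_prod_map_map hY.aemeasurable hX.aemeasurable,
          lintegral_map hF (hY.prodMk hX)]
    _ = ∫⁻ y, ∫⁻ x, F (y, x) ∂gaussianReal 0 v ∂P.map Y := lintegral_prod _ hF.aemeasurable
    _ = ∫⁻ _, ∞ ∂P.map Y := lintegral_congr_ae (hY0'.mono fun y hy ↦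
        lintegral_sq_div_abs_gaussianReal_eq_top hv hy c)
    _ = ∞ := by simp

end ProbabilityTheory

/-- **Divergence of Adam's momentum-to-RMS ratio in the `ν → 0` limit.**
Let `(g i)_{i ≥ 1}` be an i.i.d. sequence of standard Gaussian random variables, let
`μ ∈ (0,1)`, let `t ≥ 2`, and define
`u_t ω = (∑_{i=1}^{t} (1-μ) μ^(t-i) g i ω) / |g t ω|`.
Then the second moment of `u_t` is infinite. -/
theorem adam_momentum_ratio_divergence
    {Ω : Type*} [MeasurableSpace Ω] (P : Measure Ω) [IsProbabilityMeasure P]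
    (g : ℕ → Ω → ℝ) (hmeas : ∀ i, Measurable (g i))
    (hindep : iIndepFun g P)
    (hlaw : ∀ i, P.map (g i) = gaussianReal 0 1)
    (μ : ℝ) (hμ : μ ∈ Set.Ioo (0:ℝ) 1)
    (t : ℕ) (ht : 2 ≤ t) :
    (∫⁻ ω, ENNReal.ofReal
        (((∑ i ∈ Finset.Icc 1 t, (1 - μ) * μ ^ (t - i) * g i ω) / |g t ω|) ^ 2) ∂P) = ⊤ := by
  obtain ⟨n, rfl⟩ : ∃ n, t = n + 2 := ⟨t - 2, by omega⟩
  set a : ℕ → ℝ := fun i ↦ (1 - μ) * μ ^ (n + 2 - i)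
  have ha : a (n + 1) ≠ 0 := by
    have : a (n + 1) = (1 - μ) * μ := by simp [a, show n + 2 - (n + 1) = 1 by omega]
    rw [this]
    exact mul_ne_zero (by linarith [hμ.2]) hμ.1.ne'
  have hY : ∀ᵐ ω ∂P, ∑ i ∈ Finset.Icc 1 (n + 1), a i * g i ω ≠ 0 := by
    have : NullSingletonClass (P.map (g (n + 1))) := by
      rw [hlaw]; exact nullSingletonClass_gaussianReal one_ne_zero
    filter_upwards [(hindep.indepFun_sum_mul_of_notMem hmeas a (s := Finset.Icc 1 n)
      (i := n + 1) (by simp)).ae_ne_comp (by fun_prop) (hmeas _)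
      (f := fun z ↦ -z / a (n + 1)) (by fun_prop)] with ω hω
    rw [Finset.sum_Icc_succ_top (by omega)]
    contrapose! hω
    rw [eq_div_iff ha]
    linarith
  have hsplit : ∀ ω, ∑ i ∈ Finset.Icc 1 (n + 2), (1 - μ) * μ ^ (n + 2 - i) * g i ω
      = ∑ i ∈ Finset.Icc 1 (n + 1), a i * g i ω + (1 - μ) * g (n + 2) ω := fun ω ↦ by
    rw [Finset.sum_Icc_succ_top (by omega)]
    simp [a]
  simp_rw [hsplit]
  exact lintegral_sq_div_abs_eq_top_of_indepFun
    (hindep.indepFun_sum_mul_of_notMem hmeas a (by simp)) (by fun_prop) (hmeas _) one_ne_zero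
    (hlaw _) hY _
end

section
/- Logarithmic sum bound for the bias-corrected RMS terms: for every T ≥ 1, Σ_{t=1}^{T} √(n_t/(1−ν^t)) / √t ≤ √((1 + log T)/(1−ν)) · √(Σ_{t=1}^{T} g_t²). -/
/-!
Summing the recursion gives the exact identity `(1 - ν) ∑ nₜ + ν n_T = (1 - ν) ∑ gₜ²`, so
`∑ nₜ ≤ ∑ gₜ²`. Since `1 - νᵗ ≥ 1 - ν` for `t ≥ 1`, the bias-corrected terms sum to at most
`∑ gₜ² / (1 - ν)`, and Cauchy–Schwarz against the weights `1/t`, whose sum is the harmonic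
number `H_T ≤ 1 + log T`, finishes the proof.
-/

open Finset Real

theorem sum_Icc_inv_le_one_add_log (T : ℕ) : ∑ t ∈ Icc 1 T, (t : ℝ)⁻¹ ≤ 1 + log T := by
  simpa [harmonic_eq_sum_Icc] using harmonic_le_one_add_log T

theorem sum_sqrt_div_sqrt_le {a : ℕ → ℝ} (ha : ∀ t, 0 ≤ a t) (T : ℕ) :
    ∑ t ∈ Icc 1 T, √(a t) / √t ≤ √(1 + log T) * √(∑ t ∈ Icc 1 T, a t) := by
  calc ∑ t ∈ Icc 1 T, √(a t) / √t = ∑ t ∈ Icc 1 T, √((t : ℝ)⁻¹) * √(a t) := by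
        simp only [sqrt_inv, div_eq_inv_mul]
    _ ≤ √(∑ t ∈ Icc 1 T, (t : ℝ)⁻¹) * √(∑ t ∈ Icc 1 T, a t) :=
        sum_sqrt_mul_sqrt_le _ (fun t ↦ by positivity) ha
    _ ≤ √(1 + log T) * √(∑ t ∈ Icc 1 T, a t) := by
        gcongr
        exact sum_Icc_inv_le_one_add_log T

section EMA

variable {R : Type*} {ν : R} {x n : ℕ → R}

theorem ema_sum_identity [CommRing R] (hn0 : n 0 = 0)
    (hn : ∀ t, n (t + 1) = ν * n t + (1 - ν) * x (t + 1)) (T : ℕ) :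
    (1 - ν) * ∑ t ∈ Icc 1 T, n t + ν * n T = (1 - ν) * ∑ t ∈ Icc 1 T, x t := by
  induction T with
  | zero => simp [hn0]
  | succ T ih =>
    rw [sum_Icc_succ_top (by omega), sum_Icc_succ_top (by omega), hn T]
    linear_combination ih

theorem ema_nonneg [CommRing R] [PartialOrder R] [IsOrderedRing R] (hν : ν ∈ Set.Icc 0 1)
    (hx : ∀ t, 0 ≤ x t) (hn0 : n 0 = 0) (hn : ∀ t, n (t + 1) = ν * n t + (1 - ν) * x (t + 1))
    (t : ℕ) : 0 ≤ n t := by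
  induction t with
  | zero => exact hn0.ge
  | succ t ih =>
    rw [hn t]
    exact add_nonneg (mul_nonneg hν.1 ih) (mul_nonneg (sub_nonneg.2 hν.2) (hx _))

variable [Field R] [LinearOrder R] [IsStrictOrderedRing R]

theorem ema_sum_le (hν : ν ∈ Set.Ico 0 1) (hx : ∀ t, 0 ≤ x t) (hn0 : n 0 = 0)
    (hn : ∀ t, n (t + 1) = ν * n t + (1 - ν) * x (t + 1)) (T : ℕ) :
    ∑ t ∈ Icc 1 T, n t ≤ ∑ t ∈ Icc 1 T, x t := by
  have h1ν : 0 < 1 - ν := sub_pos.2 hν.2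
  have hslack : 0 ≤ ν * n T :=
    mul_nonneg hν.1 (ema_nonneg (Set.Ico_subset_Icc_self hν) hx hn0 hn T)
  refine le_of_mul_le_mul_left ?_ h1ν
  linarith [ema_sum_identity hn0 hn T]

end EMA

theorem div_one_sub_pow_le_div_one_sub {R : Type*} [Field R] [LinearOrder R]
    [IsStrictOrderedRing R] {a ν : R} (ha : 0 ≤ a) (hν : ν ∈ Set.Ico 0 1) {t : ℕ} (ht : t ≠ 0) :
    a / (1 - ν ^ t) ≤ a / (1 - ν) :=
  div_le_div_of_nonneg_left ha (sub_pos.2 hν.2)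
    (sub_le_sub_left (pow_le_of_le_one hν.1 hν.2.le ht) 1)

/-- **Logarithmic sum bound for the bias-corrected RMS terms.**
For every `T ≥ 1`,
`∑_{t=1}^{T} √(n t / (1 - ν^t)) / √t ≤ √((1 + log T)/(1 - ν)) * √(∑_{t=1}^{T} (g t)²)`. -/
theorem rms_log_sum_bound
    (ν : ℝ) (hν : ν ∈ Set.Ico (0:ℝ) 1)
    (g n : ℕ → ℝ)
    (hn0 : n 0 = 0)
    (hn : ∀ t, 1 ≤ t → n t = ν * n (t - 1) + (1 - ν) * (g t) ^ 2) :
    ∀ T : ℕ, 1 ≤ T →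
      ∑ t ∈ Finset.Icc 1 T, Real.sqrt (n t / (1 - ν ^ t)) / Real.sqrt t ≤
        Real.sqrt ((1 + Real.log T) / (1 - ν)) *
          Real.sqrt (∑ t ∈ Finset.Icc 1 T, (g t) ^ 2) := by
  intro T _
  have hn' : ∀ t, n (t + 1) = ν * n t + (1 - ν) * g (t + 1) ^ 2 := fun t ↦ by
    simpa using hn (t + 1) (by omega)
  have hg : ∀ t, 0 ≤ g t ^ 2 := fun t ↦ sq_nonneg _
  have hn_nonneg := ema_nonneg (Set.Ico_subset_Icc_self hν) hg hn0 hn'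
  have ha : ∀ t, 0 ≤ n t / (1 - ν ^ t) := fun t ↦
    div_nonneg (hn_nonneg t) (sub_nonneg.2 (pow_le_one₀ hν.1 hν.2.le))
  have hsum : ∑ t ∈ Icc 1 T, n t / (1 - ν ^ t) ≤ (∑ t ∈ Icc 1 T, g t ^ 2) / (1 - ν) :=
    calc ∑ t ∈ Icc 1 T, n t / (1 - ν ^ t) ≤ ∑ t ∈ Icc 1 T, n t / (1 - ν) :=
          sum_le_sum fun t ht ↦ div_one_sub_pow_le_div_one_sub (hn_nonneg t) hν
            (Nat.one_le_iff_ne_zero.1 (mem_Icc.1 ht).1)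
      _ = (∑ t ∈ Icc 1 T, n t) / (1 - ν) := (sum_div ..).symm
      _ ≤ (∑ t ∈ Icc 1 T, g t ^ 2) / (1 - ν) :=
          div_le_div_of_nonneg_right (ema_sum_le hν hg hn0 hn' T) (sub_nonneg.2 hν.2.le)
  calc ∑ t ∈ Icc 1 T, √(n t / (1 - ν ^ t)) / √t
      ≤ √(1 + log T) * √(∑ t ∈ Icc 1 T, n t / (1 - ν ^ t)) := sum_sqrt_div_sqrt_le ha T
    _ ≤ √(1 + log T) * √((∑ t ∈ Icc 1 T, g t ^ 2) / (1 - ν)) := by gcongr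
    _ = √((1 + log T) / (1 - ν)) * √(∑ t ∈ Icc 1 T, g t ^ 2) := by
        rw [sqrt_div' _ (sub_nonneg.2 hν.2.le), sqrt_div' _ (sub_nonneg.2 hν.2.le)]
        ring
end
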